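/- Let K be a finite simplicial complex, f a generic injective filtration function on K, [α] ∈ H_n(K^f) a class born at a and terminating at b, and let t₀ = max{ ε ∈ (0,(b−a)/2] : |Σ_ε| = 1 } with Σ_{t₀} = {Δ₁}. Then Δ₁ is a maximal simplex (has no proper coface) in the subcomplex K^f_{f(Δ₁)+2s} for every s < t₀. -/

import Mathlib

open scoped BigOperators

/-- A finite simplicial complex on vertex type `V`: a finite family of nonempty
finite vertex sets closed under passing to nonempty subsets. -/
structure SComplex (V : Type*) where
  faces : Finset (Finset V)
  nonempty_of_mem : ∀ s ∈ faces, s.Nonempty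
  down_closed : ∀ s ∈ faces, ∀ t ⊆ s, t.Nonempty → t ∈ faces

variable {V : Type*} [LinearOrder V]

/-- `f` is an injective filtration function on `K`: face-monotone and injective on faces. -/
def IsInjFiltrationFn (K : SComplex V) (f : Finset V → ℝ) : Prop :=
  (∀ s ∈ K.faces, ∀ t ∈ K.faces, s ⊆ t → f s ≤ f t) ∧
  (∀ s ∈ K.faces, ∀ t ∈ K.faces, f s = f t → s = t)

/-- The sup-distance between `f` and `g` over the faces of `K` is at most `ε`. -/
def DistLE (K : SComplex V) (f g : Finset V → ℝ) (ε : ℝ) : Prop :=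
  ∀ s ∈ K.faces, |f s - g s| ≤ ε

/-- The sublevel subcomplex `K^f_r = f⁻¹((-∞, r])`. -/
noncomputable def sublevel (K : SComplex V) (f : Finset V → ℝ) (r : ℝ) : Finset (Finset V) :=
  K.faces.filter (fun s => f s ≤ r)

variable (𝔽 : Type*) [Field 𝔽]

/-- The simplicial boundary operator on chains (finitely supported functions on
simplices), with signs determined by the linear order on vertices. -/
noncomputable def bdry : (Finset V →₀ 𝔽) →ₗ[𝔽] (Finset V →₀ 𝔽) :=
  Finsupp.lsum 𝔽 (fun s => ∑ x ∈ s,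
    ((-1 : 𝔽) ^ (s.filter (fun y => y < x)).card) • Finsupp.lsingle (s.erase x))

/-- The submodule of `n`-chains supported on simplices of `L` (of cardinality `n+1`). -/
def chainsIn (L : Finset (Finset V)) (n : ℕ) : Submodule 𝔽 (Finset V →₀ 𝔽) where
  carrier := {c | ∀ s ∈ c.support, s ∈ L ∧ s.card = n + 1}
  add_mem' := by
    intro c d hc hd s hs
    rcases Finset.mem_union.mp (Finsupp.support_add hs) with h | h
    · exact hc s h
    · exact hd s h
  zero_mem' := by intro s hs; simp at hs
  smul_mem' := by
    intro a c hc s hs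
    exact hc s (Finsupp.support_smul hs)

/-- `n`-cycles supported in `L`. -/
noncomputable def cyclesIn (L : Finset (Finset V)) (n : ℕ) : Submodule 𝔽 (Finset V →₀ 𝔽) :=
  chainsIn 𝔽 L n ⊓ LinearMap.ker (bdry 𝔽)

/-- `n`-boundaries of `(n+1)`-chains supported in `L`. -/
noncomputable def boundariesIn (L : Finset (Finset V)) (n : ℕ) : Submodule 𝔽 (Finset V →₀ 𝔽) :=
  (chainsIn 𝔽 L (n + 1)).map (bdry 𝔽)

/-- `α` is an `n`-cycle in the subcomplex `L`. -/
def IsCycleIn (L : Finset (Finset V)) (n : ℕ) (α : Finset V →₀ 𝔽) : Prop :=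
  α ∈ cyclesIn 𝔽 L n

/-- The class of `α` is trivial in `H_n(L)`. -/
def TrivialIn (L : Finset (Finset V)) (n : ℕ) (α : Finset V →₀ 𝔽) : Prop :=
  α ∈ boundariesIn 𝔽 L n

/-- `α` and `β` are homologous in `L`. -/
def HomologousIn (L : Finset (Finset V)) (n : ℕ) (α β : Finset V →₀ 𝔽) : Prop :=
  α - β ∈ boundariesIn 𝔽 L n

/-- The homology class `[α] ∈ H_n(K^f_a)` is born at `a`: it is a nontrivial cycle
at level `a` and does not come from any strictly earlier level. -/
def BornAt (K : SComplex V) (f : Finset V → ℝ) (n : ℕ) (α : Finset V →₀ 𝔽) (a : ℝ) : Prop :=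
  IsCycleIn 𝔽 (sublevel K f a) n α ∧ ¬ TrivialIn 𝔽 (sublevel K f a) n α ∧
  ∀ q < a, ¬ ∃ β, IsCycleIn 𝔽 (sublevel K f q) n β ∧ HomologousIn 𝔽 (sublevel K f a) n α β

/-- The class `[α]` terminates at level `b` in the filtration `K^f`. -/
def TerminatesAt (K : SComplex V) (f : Finset V → ℝ) (n : ℕ) (α : Finset V →₀ 𝔽) (b : ℝ) : Prop :=
  TrivialIn 𝔽 (sublevel K f b) n α ∧ ∀ q < b, ¬ TrivialIn 𝔽 (sublevel K f q) n α

/-- `Δ` is the terminal simplex of `[α]` in the filtration `K^f`: the simplex added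
at the level where `[α]` terminates. -/
def TerminalSimplex (K : SComplex V) (f : Finset V → ℝ) (n : ℕ) (α : Finset V →₀ 𝔽)
    (Δ : Finset V) : Prop :=
  Δ ∈ K.faces ∧ TerminatesAt 𝔽 K f n α (f Δ)

/-- `Σ_ε`: the set of terminal simplices of `[α]` over all injective filtration
functions within sup-distance `ε` of `f`. -/
def TermSet (K : SComplex V) (f : Finset V → ℝ) (n : ℕ) (α : Finset V →₀ 𝔽) (ε : ℝ) :
    Set (Finset V) :=
  {Δ | ∃ g, IsInjFiltrationFn K g ∧ DistLE K f g ε ∧ TerminalSimplex 𝔽 K g n α Δ}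

/-- `τ` gives birth to a class in `H_n(K^f)`. -/
def IsBirthSimplex (K : SComplex V) (f : Finset V → ℝ) (n : ℕ) (τ : Finset V) : Prop :=
  τ ∈ K.faces ∧ ∃ β : Finset V →₀ 𝔽, BornAt 𝔽 K f n β (f τ)

/-- `τ` terminates a class in `H_n(K^f)`. -/
def IsTerminalSimplexOf (K : SComplex V) (f : Finset V → ℝ) (n : ℕ) (τ : Finset V) : Prop :=
  τ ∈ K.faces ∧ ∃ (β : Finset V →₀ 𝔽) (a : ℝ),
    BornAt 𝔽 K f n β a ∧ TerminatesAt 𝔽 K f n β (f τ)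

/-- The linear order on the faces of `K` induced by `g`. -/
def inducedRel (K : SComplex V) (g : Finset V → ℝ) :
    {s // s ∈ K.faces} → {s // s ∈ K.faces} → Prop :=
  fun s t => g s.1 < g t.1

/-- `Π_ε`: the set of orders on the faces of `K` induced by injective filtration
functions within sup-distance `ε` of `f`. -/
def OrderSet (K : SComplex V) (f : Finset V → ℝ) (ε : ℝ) :
    Set ({s // s ∈ K.faces} → {s // s ∈ K.faces} → Prop) :=
  {r | ∃ g, IsInjFiltrationFn K g ∧ DistLE K f g ε ∧ r = inducedRel K g}

/-- `f` is generic: equal absolute differences of `f`-values occur only for the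
same unordered pair of faces. -/
def Generic (K : SComplex V) (f : Finset V → ℝ) : Prop :=
  ∀ s ∈ K.faces, ∀ t ∈ K.faces, ∀ s' ∈ K.faces, ∀ t' ∈ K.faces,
    s ≠ t → s' ≠ t' → |f s - f t| = |f s' - f t'| →
    (s = s' ∧ t = t') ∨ (s = t' ∧ t = s')

/-- The rank of the map `H_n(K^f_p) → H_n(K^f_q)`, realized as the dimension of
the image of the cycles at level `p` in the quotient by boundaries at level `q`. -/
noncomputable def persRank (K : SComplex V) (f : Finset V → ℝ) (n : ℕ) (p q : ℝ) : ℕ :=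
  Module.finrank 𝔽
    ↥(Submodule.map (boundariesIn 𝔽 (sublevel K f q) n).mkQ (cyclesIn 𝔽 (sublevel K f p) n))

/-- `[a, b)` is a bar of the `n`-th persistence module of `K^f`: the standard
inclusion–exclusion of ranks equals `1` for all sufficiently small offsets. -/
def IsBar (K : SComplex V) (f : Finset V → ℝ) (n : ℕ) (a b : ℝ) : Prop :=
  a < b ∧ ∃ δ > 0, ∀ ε : ℝ, 0 < ε → ε < δ →
    persRank 𝔽 K f n a (b - ε) + persRank 𝔽 K f n (a - ε) b
      = persRank 𝔽 K f n a b + persRank 𝔽 K f n (a - ε) (b - ε) + 1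

/-!
Suppose `Δ₁` had a proper coface in `K^f_{f(Δ₁)+2s}` and let `τ = Δ₁ ∪ {v}` be the first of its
cofaces to enter. Since `[α]` dies when `Δ₁` enters, every chain killing `α` at that level uses
`Δ₁`, and subtracting a multiple of `∂τ` trades `Δ₁` for the other facets of `τ`. Now lift `Δ₁`
just above the midpoint `m` of `f(Δ₁)` and `f(τ)`, and squeeze the faces of `τ` lying above `m`
into a thin window just below `m`: genericity makes `m` a non-value of `f`, so some window around
`m` contains no value of `f`. The result is an injective filtration within `t₀` of `f` in which
`[α]` dies by level `m`, before `Δ₁` enters, so its terminal simplex is not `Δ₁`, contradicting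
`Σ_{t₀} = {Δ₁}`.
-/

open Finset Filter Topology

section Boundary

variable {𝔽}

lemma bdry_single (s : Finset V) (r : 𝔽) :
    bdry 𝔽 (Finsupp.single s r) =
      ∑ x ∈ s, (-1 : 𝔽) ^ #{y ∈ s | y < x} • Finsupp.single (s.erase x) r := by
  simp [bdry, Finsupp.lsingle]

lemma card_filter_lt_erase_add_one {s : Finset V} {x y : V} (hx : x ∈ s) (hxy : x < y) :
    #{z ∈ s.erase x | z < y} + 1 = #{z ∈ s | z < y} := by
  rw [filter_erase, card_erase_add_one (mem_filter.2 ⟨hx, hxy⟩)]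

lemma filter_lt_erase_of_le {s : Finset V} {x y : V} (hxy : x ≤ y) :
    {z ∈ s.erase y | z < x} = {z ∈ s | z < x} := by
  rw [filter_erase, erase_eq_of_notMem]
  simp [hxy]

variable (𝔽) in
lemma neg_one_pow_bdry_add_swap_eq_zero {s : Finset V} {x y : V} (hx : x ∈ s) (hy : y ∈ s)
    (hxy : x ≠ y) :
    (-1 : 𝔽) ^ #{z ∈ s | z < x} * (-1) ^ #{z ∈ s.erase x | z < y}
      + (-1) ^ #{z ∈ s | z < y} * (-1) ^ #{z ∈ s.erase y | z < x} = 0 := by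
  wlog h : x < y generalizing x y
  · rw [add_comm]
    exact this hy hx hxy.symm (hxy.lt_or_gt.resolve_left h)
  rw [filter_lt_erase_of_le h.le, ← card_filter_lt_erase_add_one hx h]
  ring

lemma bdry_bdry_single (s : Finset V) (r : 𝔽) :
    bdry 𝔽 (bdry 𝔽 (Finsupp.single s r)) = 0 := by
  simp only [bdry_single, map_sum, map_smul, smul_sum, smul_smul]
  rw [sum_sigma']
  -- the terms deleting `x` then `y` and `y` then `x` cancel in pairs
  refine sum_involution (fun p _ => ⟨p.2, p.1⟩) ?_ ?_ ?_ ?_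
  · rintro ⟨x, y⟩ hp
    simp only [mem_sigma, mem_erase] at hp
    rw [erase_right_comm, ← add_smul,
      neg_one_pow_bdry_add_swap_eq_zero 𝔽 hp.1 hp.2.2 (Ne.symm hp.2.1), zero_smul]
  · rintro ⟨x, y⟩ hp - h
    simp only [mem_sigma, mem_erase] at hp
    exact hp.2.1 (congrArg Sigma.fst h)
  · rintro ⟨x, y⟩ hp
    simp only [mem_sigma, mem_erase] at hp ⊢
    exact ⟨hp.2.2, hp.2.1.symm, hp.1⟩
  · intros
    rfl

lemma exists_eq_erase_of_mem_support_bdry_single {s t : Finset V} {r : 𝔽}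
    (ht : t ∈ (bdry 𝔽 (Finsupp.single s r)).support) : ∃ x ∈ s, t = s.erase x := by
  rw [bdry_single] at ht
  obtain ⟨x, hx, ht⟩ := mem_biUnion.1 (Finsupp.support_finsetSum ht)
  exact ⟨x, hx, mem_singleton.1 (Finsupp.support_single_subset (Finsupp.support_smul ht))⟩

lemma bdry_single_insert_apply {Δ : Finset V} {v : V} (hv : v ∉ Δ) (r : 𝔽) :
    bdry 𝔽 (Finsupp.single (insert v Δ) r) Δ = (-1) ^ #{y ∈ insert v Δ | y < v} * r := by
  rw [bdry_single, Finsupp.finsetSum_apply, sum_eq_single_of_mem v (mem_insert_self v Δ)]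
  · rw [Finsupp.smul_apply, erase_insert hv, Finsupp.single_eq_same, smul_eq_mul]
  · intro x hx hxv
    have hΔ : (insert v Δ).erase x ≠ Δ := fun h =>
      hv (h ▸ mem_erase.2 ⟨Ne.symm hxv, mem_insert_self v Δ⟩)
    rw [Finsupp.smul_apply, Finsupp.single_eq_of_ne hΔ.symm, smul_zero]

lemma exists_bdry_eq_apply_eq_zero (c : Finset V →₀ 𝔽) {Δ : Finset V} {v : V} (hv : v ∉ Δ) :
    ∃ c' : Finset V →₀ 𝔽, bdry 𝔽 c' = bdry 𝔽 c ∧ c' Δ = 0 ∧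
      ∀ σ ∈ c'.support, σ ∈ c.support ∨ ∃ x ∈ insert v Δ, σ = (insert v Δ).erase x := by
  have hsign : (-1 : 𝔽) ^ #{y ∈ insert v Δ | y < v} ≠ 0 :=
    pow_ne_zero _ (neg_ne_zero.2 one_ne_zero)
  refine ⟨c - bdry 𝔽 (Finsupp.single (insert v Δ) (c Δ / (-1) ^ #{y ∈ insert v Δ | y < v})),
    ?_, ?_, fun σ hσ => ?_⟩
  · rw [map_sub, bdry_bdry_single, sub_zero]
  · rw [Finsupp.sub_apply, bdry_single_insert_apply hv, mul_div_cancel₀ _ hsign, sub_self]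
  · rcases mem_union.1 (Finsupp.support_sub hσ) with h | h
    · exact Or.inl h
    · exact Or.inr (exists_eq_erase_of_mem_support_bdry_single h)

end Boundary

section Filtration

variable {U : Type*} {K : SComplex U} {f g : Finset U → ℝ}

lemma IsInjFiltrationFn.lt_of_ssubset (hg : IsInjFiltrationFn K g) {σ τ : Finset U}
    (hσ : σ ∈ K.faces) (hτ : τ ∈ K.faces) (h : σ ⊂ τ) : g σ < g τ :=
  (hg.1 σ hσ τ hτ h.subset).lt_of_ne fun he => h.ne (hg.2 σ hσ τ hτ he)

lemma distLE_self {ε : ℝ} (hε : 0 ≤ ε) : DistLE K f f ε := fun σ _ => by simpa using hε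

lemma exists_sublevel_eq {q : ℝ} (h : (sublevel K g q).Nonempty) :
    ∃ σ ∈ K.faces, g σ ≤ q ∧ sublevel K g (g σ) = sublevel K g q := by
  obtain ⟨σ, hσ, hmax⟩ := exists_max_image _ g h
  obtain ⟨hσK, hσq⟩ := mem_filter.1 hσ
  refine ⟨σ, hσK, hσq, ext fun ρ => ?_⟩
  simp only [sublevel, mem_filter]
  exact ⟨fun h => ⟨h.1, h.2.trans hσq⟩, fun h => ⟨h.1, hmax ρ (mem_filter.2 h)⟩⟩

lemma Generic.apply_ne_midpoint (hgen : Generic K f) {σ τ : Finset U} (hσ : σ ∈ K.faces)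
    (hτ : τ ∈ K.faces) (hστ : f σ ≠ f τ) : ∀ ρ ∈ K.faces, f ρ ≠ (f σ + f τ) / 2 := by
  intro ρ hρ he
  have hρσ : ρ ≠ σ := by rintro rfl; apply hστ; linarith
  have hρτ : ρ ≠ τ := by rintro rfl; apply hστ; linarith
  have hsym : |f σ - f ρ| = |f ρ - f τ| := by rw [he]; ring_nf
  rcases hgen σ hσ ρ hρ ρ hρ τ hτ hρσ.symm hρτ hsym with ⟨h, -⟩ | ⟨h, -⟩
  · exact hρσ h.symm
  · exact hστ (congrArg f h)

lemma exists_insert_minimal_coface [DecidableEq U] (hf : IsInjFiltrationFn K f)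
    {Δ ρ : Finset U} (hρ : ρ ∈ K.faces) (hΔρ : Δ ⊂ ρ) :
    ∃ v ∉ Δ, insert v Δ ∈ K.faces ∧ ∀ ρ ∈ K.faces, Δ ⊂ ρ → f (insert v Δ) ≤ f ρ := by
  obtain ⟨μ, hμ, hmin⟩ := exists_min_image {ρ ∈ K.faces | Δ ⊂ ρ} f ⟨ρ, mem_filter.2 ⟨hρ, hΔρ⟩⟩
  obtain ⟨hμK, hΔμ⟩ := mem_filter.1 hμ
  obtain ⟨v, hvμ, hvΔ⟩ := exists_of_ssubset hΔμ
  have hsub : insert v Δ ⊆ μ := insert_subset hvμ hΔμ.subset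
  have hK : insert v Δ ∈ K.faces := K.down_closed μ hμK _ hsub (insert_nonempty v Δ)
  exact ⟨v, hvΔ, hK, fun ρ hρ hΔρ =>
    (hf.1 _ hK μ hμK hsub).trans (hmin ρ (mem_filter.2 ⟨hρ, hΔρ⟩))⟩

end Filtration

section Termination

variable {𝔽} {K : SComplex V} {f g : Finset V → ℝ} {n : ℕ} {α : Finset V →₀ 𝔽}

lemma TerminatesAt.ne_zero {b : ℝ} (h : TerminatesAt 𝔽 K g n α b) : α ≠ 0 := by
  rintro rfl
  exact h.2 (b - 1) (by linarith) (Submodule.zero_mem _)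

lemma eq_zero_of_trivialIn_empty (h : TrivialIn 𝔽 ∅ n α) : α = 0 := by
  obtain ⟨c, hc, rfl⟩ := h
  have : c = 0 :=
    Finsupp.support_eq_empty.1 (eq_empty_of_forall_notMem fun s hs => by simpa using (hc s hs).1)
  rw [this, map_zero]

lemma exists_terminalSimplex_le (hα : α ≠ 0) {r : ℝ} (h : TrivialIn 𝔽 (sublevel K g r) n α) :
    ∃ Δ, TerminalSimplex 𝔽 K g n α Δ ∧ g Δ ≤ r := by
  classical
  have hface : ∀ q, TrivialIn 𝔽 (sublevel K g q) n α →
      ∃ σ ∈ {ρ ∈ K.faces | TrivialIn 𝔽 (sublevel K g (g ρ)) n α}, g σ ≤ q := by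
    intro q hq
    obtain hempty | hne := (sublevel K g q).eq_empty_or_nonempty
    · exact absurd (eq_zero_of_trivialIn_empty (hempty ▸ hq)) hα
    obtain ⟨σ, hσK, hσq, heq⟩ := exists_sublevel_eq hne
    exact ⟨σ, mem_filter.2 ⟨hσK, heq ▸ hq⟩, hσq⟩
  obtain ⟨σ, hσ, hσr⟩ := hface r h
  obtain ⟨Δ, hΔ, hmin⟩ := exists_min_image _ g ⟨σ, hσ⟩
  obtain ⟨hΔK, hΔ⟩ := mem_filter.1 hΔ
  refine ⟨Δ, ⟨hΔK, hΔ, fun q hq hq' => ?_⟩, (hmin σ hσ).trans hσr⟩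
  obtain ⟨ρ, hρ, hρq⟩ := hface q hq'
  linarith [hmin ρ hρ]

lemma terminalSimplex_of_termSet_eq_singleton (hf : IsInjFiltrationFn K f) {b ε : ℝ}
    (hterm : TerminatesAt 𝔽 K f n α b) (hε : 0 ≤ ε) {Δ₁ : Finset V}
    (hΔ₁ : TermSet 𝔽 K f n α ε = {Δ₁}) : TerminalSimplex 𝔽 K f n α Δ₁ := by
  obtain ⟨Δ, hΔ, -⟩ := exists_terminalSimplex_le hterm.ne_zero hterm.1
  have hmem : Δ ∈ TermSet 𝔽 K f n α ε := ⟨f, hf, distLE_self hε, hΔ⟩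
  rw [hΔ₁, Set.mem_singleton_iff] at hmem
  rwa [← hmem]

lemma apply_le_of_termSet_eq_singleton {ε r : ℝ} {Δ₁ : Finset V}
    (hΔ₁ : TermSet 𝔽 K f n α ε = {Δ₁}) (hα : α ≠ 0) (hg : IsInjFiltrationFn K g)
    (hfg : DistLE K f g ε) (h : TrivialIn 𝔽 (sublevel K g r) n α) : g Δ₁ ≤ r := by
  obtain ⟨Δ, hΔ, hΔr⟩ := exists_terminalSimplex_le hα h
  have hmem : Δ ∈ TermSet 𝔽 K f n α ε := ⟨g, hg, hfg, hΔ⟩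
  rw [hΔ₁, Set.mem_singleton_iff] at hmem
  rwa [← hmem]

lemma TerminalSimplex.apply_ne_zero (hg : IsInjFiltrationFn K g) {Δ : Finset V}
    (hΔ : TerminalSimplex 𝔽 K g n α Δ) {c : Finset V →₀ 𝔽}
    (hc : c ∈ chainsIn 𝔽 (sublevel K g (g Δ)) (n + 1)) (hcα : bdry 𝔽 c = α) : c Δ ≠ 0 := by
  intro hcΔ
  have hsupp : c.support.Nonempty := by
    rw [Finsupp.support_nonempty_iff]
    rintro rfl
    exact hΔ.2.ne_zero (by rw [← hcα, map_zero])
  obtain ⟨σ, hσ, hmax⟩ := exists_max_image c.support g hsupp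
  obtain ⟨hσK, hσΔ⟩ := mem_filter.1 (hc σ hσ).1
  have hlt : g σ < g Δ := hσΔ.lt_of_ne fun h =>
    Finsupp.mem_support_iff.1 hσ (hg.2 σ hσK Δ hΔ.1 h ▸ hcΔ)
  exact hΔ.2.2 (g σ) hlt
    ⟨c, fun ρ hρ => ⟨mem_filter.2 ⟨(mem_filter.1 (hc ρ hρ).1).1, hmax ρ hρ⟩, (hc ρ hρ).2⟩, hcα⟩

lemma trivialIn_bdry_of_replace_facet {L L' : Finset (Finset V)} {c : Finset V →₀ 𝔽}
    (hc : c ∈ chainsIn 𝔽 L (n + 1)) {Δ : Finset V} {v : V} (hv : v ∉ Δ) (hΔ : Δ.card = n + 2)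
    (hL : ∀ σ ∈ L, σ ≠ Δ → σ ∈ L')
    (hτL : ∀ x ∈ insert v Δ, (insert v Δ).erase x ≠ Δ → (insert v Δ).erase x ∈ L') :
    TrivialIn 𝔽 L' n (bdry 𝔽 c) := by
  obtain ⟨c', hc'c, hc'Δ, hc'supp⟩ := exists_bdry_eq_apply_eq_zero c hv
  refine ⟨c', fun σ hσ => ?_, hc'c⟩
  have hσΔ : σ ≠ Δ := by
    rintro rfl
    exact Finsupp.mem_support_iff.1 hσ hc'Δ
  rcases hc'supp σ hσ with hσc | ⟨x, hx, rfl⟩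
  · exact ⟨hL σ (hc σ hσc).1 hσΔ, (hc σ hσc).2⟩
  · exact ⟨hτL x hx hσΔ, by rw [card_erase_of_mem hx, card_insert_of_notMem hv, hΔ]; rfl⟩

end Termination

section Perturbation

variable {U : Type*} [DecidableEq U] {K : SComplex U} {f : Finset U → ℝ} {Δ τ σ σ₁ σ₂ : Finset U}
  {m η : ℝ}

noncomputable def perturbAcross (f : Finset U → ℝ) (Δ τ : Finset U) (m η : ℝ) (σ : Finset U) :
    ℝ :=
  if σ ⊂ τ ∧ m < f σ then m - η * (f τ - f σ) / (f τ - m)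
  else if σ = Δ then m + η else f σ

lemma perturbAcross_mem_Ioo (hf : IsInjFiltrationFn K f) (hσ : σ ∈ K.faces) (hτ : τ ∈ K.faces)
    (hη : 0 < η) (hmove : σ ⊂ τ ∧ m < f σ) : perturbAcross f Δ τ m η σ ∈ Set.Ioo (m - η) m := by
  have hστ := hf.lt_of_ssubset hσ hτ hmove.1
  have hpos : 0 < (f τ - f σ) / (f τ - m) := div_pos (by linarith) (by linarith [hmove.2])
  have hlt : (f τ - f σ) / (f τ - m) < 1 := (div_lt_one (by linarith [hmove.2])).2 (by linarith)
  rw [perturbAcross, if_pos hmove, mul_div_assoc]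
  constructor <;> nlinarith

lemma perturbAcross_self (hΔm : f Δ < m) : perturbAcross f Δ τ m η Δ = m + η := by
  rw [perturbAcross, if_neg fun h => by linarith [h.2], if_pos rfl]

lemma perturbAcross_of_not (hσΔ : σ ≠ Δ) (hmove : ¬(σ ⊂ τ ∧ m < f σ)) :
    perturbAcross f Δ τ m η σ = f σ := by
  rw [perturbAcross, if_neg hmove, if_neg hσΔ]

lemma perturbAcross_le_of_subset (hf : IsInjFiltrationFn K f) (hτ : τ ∈ K.faces)
    (hτmin : ∀ ρ ∈ K.faces, Δ ⊂ ρ → f τ ≤ f ρ) (hΔm : f Δ < m) (hmτ : m < f τ) (hη : 0 < η)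
    (hgap : ∀ σ ∈ K.faces, η < |f σ - m|) (hσ₁ : σ₁ ∈ K.faces) (hσ₂ : σ₂ ∈ K.faces)
    (h12 : σ₁ ⊆ σ₂) : perturbAcross f Δ τ m η σ₁ ≤ perturbAcross f Δ τ m η σ₂ := by
  obtain rfl | h12 := eq_or_ssubset_of_subset h12
  · exact le_rfl
  have hf12 := hf.lt_of_ssubset hσ₁ hσ₂ h12
  by_cases hmove₂ : σ₂ ⊂ τ ∧ m < f σ₂
  · have h₂ := perturbAcross_mem_Ioo (Δ := Δ) hf hσ₂ hτ hη hmove₂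
    by_cases hmove₁ : σ₁ ⊂ τ ∧ m < f σ₁
    · simp only [perturbAcross, if_pos hmove₁, if_pos hmove₂]
      gcongr
    have hσ₁Δ : σ₁ ≠ Δ := by
      rintro rfl
      linarith [hτmin σ₂ hσ₂ h12, hf.lt_of_ssubset hσ₂ hτ hmove₂.1]
    have hσ₁m : f σ₁ ≤ m := not_lt.1 fun h => hmove₁ ⟨h12.trans hmove₂.1, h⟩
    have hgap₁ := hgap σ₁ hσ₁
    rw [abs_of_nonpos (by linarith)] at hgap₁
    rw [perturbAcross_of_not hσ₁Δ hmove₁]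
    linarith [h₂.1]
  by_cases hσ₂Δ : σ₂ = Δ
  · subst hσ₂Δ
    rw [perturbAcross_self hΔm, perturbAcross_of_not h12.ne fun h => by linarith [h.2]]
    linarith
  rw [perturbAcross_of_not hσ₂Δ hmove₂]
  by_cases hmove₁ : σ₁ ⊂ τ ∧ m < f σ₁
  · linarith [(perturbAcross_mem_Ioo (Δ := Δ) hf hσ₁ hτ hη hmove₁).2, hmove₁.2]
  by_cases hσ₁Δ : σ₁ = Δ
  · subst hσ₁Δ
    have hgapτ := hgap τ hτ
    rw [abs_of_pos (by linarith)] at hgapτ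
    rw [perturbAcross_self hΔm]
    linarith [hτmin σ₂ hσ₂ h12]
  rw [perturbAcross_of_not hσ₁Δ hmove₁]
  exact hf12.le

lemma moved_of_perturbAcross_mem_Ioo (hΔm : f Δ < m) (hgap : ∀ σ ∈ K.faces, η < |f σ - m|)
    (hσ : σ ∈ K.faces) (h : perturbAcross f Δ τ m η σ ∈ Set.Ioo (m - η) m) :
    σ ⊂ τ ∧ m < f σ := by
  by_contra hmove
  by_cases hσΔ : σ = Δ
  · subst hσΔ
    rw [perturbAcross_self hΔm] at h
    linarith [h.1, h.2]
  rw [perturbAcross_of_not hσΔ hmove] at h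
  exact (hgap σ hσ).not_ge (abs_sub_lt_iff.2 ⟨by linarith [h.1, h.2], by linarith [h.1]⟩).le

lemma eq_of_perturbAcross_eq_add (hf : IsInjFiltrationFn K f) (hτ : τ ∈ K.faces) (hη : 0 < η)
    (hgap : ∀ σ ∈ K.faces, η < |f σ - m|) (hσ : σ ∈ K.faces)
    (h : perturbAcross f Δ τ m η σ = m + η) : σ = Δ := by
  by_contra hσΔ
  by_cases hmove : σ ⊂ τ ∧ m < f σ
  · linarith [(perturbAcross_mem_Ioo (Δ := Δ) hf hσ hτ hη hmove).2]
  rw [perturbAcross_of_not hσΔ hmove] at h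
  have hgapσ := hgap σ hσ
  rw [h, add_sub_cancel_left, abs_of_pos hη] at hgapσ
  exact lt_irrefl η hgapσ

lemma perturbAcross_injOn (hf : IsInjFiltrationFn K f) (hτ : τ ∈ K.faces) (hΔm : f Δ < m)
    (hη : 0 < η) (hgap : ∀ σ ∈ K.faces, η < |f σ - m|) (hσ₁ : σ₁ ∈ K.faces)
    (hσ₂ : σ₂ ∈ K.faces) (he : perturbAcross f Δ τ m η σ₁ = perturbAcross f Δ τ m η σ₂) :
    σ₁ = σ₂ := by
  by_cases hmove₁ : σ₁ ⊂ τ ∧ m < f σ₁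
  · have hIoo := perturbAcross_mem_Ioo (Δ := Δ) hf hσ₁ hτ hη hmove₁
    rw [he] at hIoo
    have hmove₂ := moved_of_perturbAcross_mem_Ioo hΔm hgap hσ₂ hIoo
    simp only [perturbAcross, if_pos hmove₁, if_pos hmove₂, sub_right_inj] at he
    rw [div_left_inj' (by linarith [hmove₁.2, hf.lt_of_ssubset hσ₁ hτ hmove₁.1]),
      mul_right_inj' hη.ne', sub_right_inj] at he
    exact hf.2 _ hσ₁ _ hσ₂ he
  by_cases hσ₁Δ : σ₁ = Δ
  · subst hσ₁Δ
    rw [perturbAcross_self hΔm] at he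
    exact (eq_of_perturbAcross_eq_add hf hτ hη hgap hσ₂ he.symm).symm
  by_cases hmove₂ : σ₂ ⊂ τ ∧ m < f σ₂
  · have hIoo := perturbAcross_mem_Ioo (Δ := Δ) hf hσ₂ hτ hη hmove₂
    rw [← he] at hIoo
    exact absurd (moved_of_perturbAcross_mem_Ioo hΔm hgap hσ₁ hIoo) hmove₁
  by_cases hσ₂Δ : σ₂ = Δ
  · subst hσ₂Δ
    rw [perturbAcross_self hΔm] at he
    exact eq_of_perturbAcross_eq_add hf hτ hη hgap hσ₁ he
  rw [perturbAcross_of_not hσ₁Δ hmove₁, perturbAcross_of_not hσ₂Δ hmove₂] at he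
  exact hf.2 _ hσ₁ _ hσ₂ he

lemma distLE_perturbAcross (hf : IsInjFiltrationFn K f) (hτ : τ ∈ K.faces) (hΔm : f Δ < m)
    (hη : 0 < η) {ε : ℝ} (hΔε : m + η - f Δ ≤ ε) (hτε : f τ - m + η ≤ ε) :
    DistLE K f (perturbAcross f Δ τ m η) ε := by
  intro σ hσ
  by_cases hmove : σ ⊂ τ ∧ m < f σ
  · have hIoo := perturbAcross_mem_Ioo (Δ := Δ) hf hσ hτ hη hmove
    rw [abs_of_pos (by linarith [hIoo.2, hmove.2])]
    linarith [hIoo.1, hf.lt_of_ssubset hσ hτ hmove.1]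
  by_cases hσΔ : σ = Δ
  · subst hσΔ
    rw [perturbAcross_self hΔm, abs_of_neg (by linarith)]
    linarith
  rw [perturbAcross_of_not hσΔ hmove, sub_self, abs_zero]
  linarith

lemma perturbAcross_le (hf : IsInjFiltrationFn K f) (hτ : τ ∈ K.faces) (hη : 0 < η)
    (hσ : σ ∈ K.faces) (hσΔ : σ ≠ Δ) (h : f σ ≤ m ∨ σ ⊂ τ) : perturbAcross f Δ τ m η σ ≤ m := by
  by_cases hmove : σ ⊂ τ ∧ m < f σ
  · exact (perturbAcross_mem_Ioo hf hσ hτ hη hmove).2.le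
  rw [perturbAcross_of_not hσΔ hmove]
  exact h.elim id fun hστ => not_lt.1 fun hlt => hmove ⟨hστ, hlt⟩

theorem exists_nearby_filtration_delaying (hf : IsInjFiltrationFn K f) (hτ : τ ∈ K.faces)
    (hτmin : ∀ ρ ∈ K.faces, Δ ⊂ ρ → f τ ≤ f ρ) (hΔm : f Δ < m) (hmτ : m < f τ)
    (hm : ∀ σ ∈ K.faces, f σ ≠ m) {ε : ℝ} (hΔε : m - f Δ < ε) (hτε : f τ - m < ε) :
    ∃ g, IsInjFiltrationFn K g ∧ DistLE K f g ε ∧ m < g Δ ∧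
      ∀ σ ∈ K.faces, σ ≠ Δ → f σ ≤ m ∨ σ ⊂ τ → g σ ≤ m := by
  have hsmall : ∀ᶠ η in 𝓝[>] (0 : ℝ),
      η < ε - (m - f Δ) ∧ η < ε - (f τ - m) ∧ ∀ σ ∈ K.faces, η < |f σ - m| :=
    nhdsWithin_le_nhds <| (eventually_lt_nhds (by linarith)).and <|
      (eventually_lt_nhds (by linarith)).and <| (eventually_all_finset _).2 fun σ hσ =>
        eventually_lt_nhds (abs_pos.2 (sub_ne_zero.2 (hm σ hσ)))
  obtain ⟨η, ⟨hΔη, hτη, hgap⟩, hη : 0 < η⟩ := (hsmall.and self_mem_nhdsWithin).exists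
  refine ⟨perturbAcross f Δ τ m η,
    ⟨fun σ₁ h₁ σ₂ h₂ => perturbAcross_le_of_subset hf hτ hτmin hΔm hmτ hη hgap h₁ h₂,
      fun σ₁ h₁ σ₂ h₂ => perturbAcross_injOn hf hτ hΔm hη hgap h₁ h₂⟩,
    distLE_perturbAcross hf hτ hΔm hη (by linarith) (by linarith), ?_,
    fun σ hσ hσΔ => perturbAcross_le hf hτ hη hσ hσΔ⟩
  rw [perturbAcross_self hΔm]
  linarith

end Perturbation

theorem stmt10_general {V : Type*} [LinearOrder V] (𝔽 : Type*) [Field 𝔽]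
    (K : SComplex V) (f : Finset V → ℝ) (hf : IsInjFiltrationFn K f) (hgen : Generic K f)
    (n : ℕ) (α : Finset V →₀ 𝔽) (b : ℝ)
    (hterm : TerminatesAt 𝔽 K f n α b)
    (t₀ : ℝ) (Δ₁ : Finset V)
    (hΔ : TermSet 𝔽 K f n α t₀ = {Δ₁}) :
    ∀ s : ℝ, s < t₀ → ∀ τ ∈ sublevel K f (f Δ₁ + 2 * s), ¬ Δ₁ ⊂ τ := by
  intro s hs ρ hρ hΔ₁ρ
  obtain ⟨hρK, hρs⟩ := mem_filter.1 hρ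
  obtain ⟨-, -, -, hΔ₁K, -⟩ : Δ₁ ∈ TermSet 𝔽 K f n α t₀ := hΔ ▸ rfl
  have ht₀ : 0 ≤ t₀ := by linarith [hf.lt_of_ssubset hΔ₁K hρK hΔ₁ρ]
  have hΔ₁term := terminalSimplex_of_termSet_eq_singleton hf hterm ht₀ hΔ
  obtain ⟨c, hc, hcα⟩ := hΔ₁term.2.1
  have hcard : Δ₁.card = n + 2 :=
    (hc Δ₁ (Finsupp.mem_support_iff.2 (hΔ₁term.apply_ne_zero hf hc hcα))).2
  obtain ⟨v, hv, hτK, hτmin⟩ := exists_insert_minimal_coface hf hρK hΔ₁ρ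
  have hΔ₁τ := hf.lt_of_ssubset hΔ₁K hτK (ssubset_insert hv)
  have hτρ := hτmin ρ hρK hΔ₁ρ
  set m := (f Δ₁ + f (insert v Δ₁)) / 2 with hm
  obtain ⟨g, hg, hfg, hΔ₁g, hgm⟩ := exists_nearby_filtration_delaying hf hτK hτmin
    (m := m) (ε := t₀) (by linarith) (by linarith) (hgen.apply_ne_midpoint hΔ₁K hτK hΔ₁τ.ne)
    (by linarith) (by linarith)
  have hkill : TrivialIn 𝔽 (sublevel K g m) n α := by
    refine hcα ▸ trivialIn_bdry_of_replace_facet hc hv hcard (fun σ hσ hσΔ => ?_) fun x hx hne => ?_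
    · obtain ⟨hσK, hσf⟩ := mem_filter.1 hσ
      exact mem_filter.2 ⟨hσK, hgm σ hσK hσΔ (Or.inl (by linarith))⟩
    · have hK := K.down_closed _ hτK _ (erase_subset x _)
        (card_pos.1 (by rw [card_erase_of_mem hx, card_insert_of_notMem hv]; omega))
      exact mem_filter.2 ⟨hK, hgm _ hK hne (Or.inr (erase_ssubset hx))⟩
  linarith [apply_le_of_termSet_eq_singleton hΔ hterm.ne_zero hg hfg hkill]

/-- Proposition `PropStep2`(2): the unique terminal simplex
`Δ₁` at the maximal rigid scale `t₀` is a maximal simplex of `K^f_{f(Δ₁)+2s}`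
for all `s < t₀`. -/
theorem stmt10 {V : Type*} [LinearOrder V] (𝔽 : Type*) [Field 𝔽]
    (K : SComplex V) (f : Finset V → ℝ) (hf : IsInjFiltrationFn K f) (hgen : Generic K f)
    (n : ℕ) (α : Finset V →₀ 𝔽) (a b : ℝ)
    (hborn : BornAt 𝔽 K f n α a) (hterm : TerminatesAt 𝔽 K f n α b)
    (t₀ : ℝ) (Δ₁ : Finset V)
    (ht₀ : IsGreatest {ε : ℝ | 0 < ε ∧ ε ≤ (b - a) / 2 ∧ (TermSet 𝔽 K f n α ε).ncard = 1} t₀)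
    (hΔ : TermSet 𝔽 K f n α t₀ = {Δ₁}) :
    ∀ s : ℝ, s < t₀ → ∀ τ ∈ sublevel K f (f Δ₁ + 2 * s), ¬ Δ₁ ⊂ τ :=
  stmt10_general 𝔽 K f hf hgen n α b hterm t₀ Δ₁ hΔ
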